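/- Let W be a Coxeter group, J ⊆ S, v ∈ W, τ ∈ W/W_J with vW_J ≤ τ, and let w = up(v,τ) be the minimal element of {x ∈ W : v ≤ x, xW_J = τ}. Let s be a simple reflection. If sτ > τ then sw > w; if sτ < τ then sw < w; and if sτ = τ and sv > v then sw > w. -/

import Mathlib

namespace KMChev

open CoxeterSystem

variable {B W : Type*} [Group W] {M : CoxeterMatrix B}

/-- Bruhat covering relation: `w = v t` for a reflection `t` and `ℓ(w) = ℓ(v) + 1`. -/
def BruhatCov (cs : CoxeterSystem M W) (v w : W) : Prop :=
  (∃ t : W, cs.IsReflection t ∧ w = v * t) ∧ cs.length w = cs.length v + 1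

/-- The (strong) Bruhat order on a Coxeter group. -/
def BruhatLE (cs : CoxeterSystem M W) : W → W → Prop :=
  Relation.ReflTransGen (BruhatCov cs)

/-- Strict Bruhat order. -/
def BruhatLT (cs : CoxeterSystem M W) (v w : W) : Prop :=
  BruhatLE cs v w ∧ v ≠ w

/-- The standard parabolic subgroup `W_J` generated by the simple reflections in `J`. -/
def WJ (cs : CoxeterSystem M W) (J : Set B) : Subgroup W :=
  Subgroup.closure (cs.simple '' J)

/-- The set `W^J` of minimal length coset representatives:
`w` with `ℓ(w s_j) > ℓ(w)` for all `j ∈ J`. -/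
def MinRep (cs : CoxeterSystem M W) (J : Set B) : Set W :=
  {w : W | ∀ j ∈ J, cs.length w < cs.length (w * cs.simple j)}

/-- The Bruhat order on `W/W_J`, transported from `W^J` via `w ↦ w W_J`. -/
def CosetLE (cs : CoxeterSystem M W) (J : Set B) (σ τ : W ⧸ WJ cs J) : Prop :=
  ∃ v w : W, v ∈ MinRep cs J ∧ w ∈ MinRep cs J ∧
    (QuotientGroup.mk v : W ⧸ WJ cs J) = σ ∧ (QuotientGroup.mk w : W ⧸ WJ cs J) = τ ∧
    BruhatLE cs v w

/-- Strict Bruhat order on `W/W_J`. -/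
def CosetLT (cs : CoxeterSystem M W) (J : Set B) (σ τ : W ⧸ WJ cs J) : Prop :=
  CosetLE cs J σ τ ∧ σ ≠ τ

end KMChev

/-!
Write `w = u a` with `u` the minimal length representative of `τ` and `a ∈ W_J`, so that
`ℓ(w) = ℓ(u) + ℓ(a)`. If `τ < sτ`, then `ℓ(u) < ℓ(u')` for the minimal representative `u'` of
`sτ`, which forces `u' = su` with `ℓ(su) = ℓ(u) + 1`; hence `sw = (su) a` has length `ℓ(w) + 1`.
The case `sτ < τ` is the same statement for `sτ` and `sw`. If `sτ = τ`, `sv > v` but `sw < w`,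
the lifting property of the Bruhat order gives `v ≤ sw`, and `sw` lies in `τ`: this contradicts
the minimality of `w`.

The lifting property comes from the subword property, which needs the strong exchange
condition; strong exchange is read off from the sign representation of `W` on `W × {±1}`.
-/

namespace List

theorem even_count_of_getElem_eq_getElem_add {α : Type*} [DecidableEq α] {l : List α} {m : ℕ}
    (hl : l.length = 2 * m) (h : ∀ k (hk : k < m), l[k] = l[k + m]) (a : α) :
    Even (l.count a) := by
  have : l.drop m = l.take m := ext_getElem (by simp; omega) fun k h₁ _ => by
    have hk : k < m := by rw [length_drop] at h₁; omega
    simp [h k hk, add_comm]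
  rw [← take_append_drop m l, count_append, this]
  exact ⟨_, rfl⟩

end List

namespace CoxeterSystem

open List

variable {B W : Type*} [Group W] {M : CoxeterMatrix B} (cs : CoxeterSystem M W)

local prefix:100 "s" => cs.simple
local prefix:100 "π" => cs.wordProd
local prefix:100 "ℓ" => cs.length
local prefix:100 "ris" => cs.rightInvSeq

lemma prod_map_alternatingWord_two_mul {G : Type*} [Monoid G] (f : B → G) (i j : B) (m : ℕ) :
    ((alternatingWord i j (2 * m)).map f).prod = (f i * f j) ^ m := by
  induction m with
  | zero => simp [alternatingWord]
  | succ m ih =>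
    rw [show 2 * (m + 1) = 2 * m + 1 + 1 by ring, alternatingWord_succ', alternatingWord_succ']
    simp [ih, pow_succ', mul_assoc]

lemma alternatingWord_two_mul_reverse (i j : B) (m : ℕ) :
    (alternatingWord i j (2 * m)).reverse = alternatingWord j i (2 * m) := by
  refine ext_getElem (by simp) fun k h₁ _ => ?_
  simp only [length_reverse, length_alternatingWord] at h₁
  rw [getElem_reverse, getElem_alternatingWord _ _ _ _ (by simp; omega),
    getElem_alternatingWord _ _ _ _ h₁]
  simp only [length_alternatingWord, Nat.even_iff]
  split_ifs <;> first | rfl | omega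

lemma even_count_rightInvSeq_alternatingWord [DecidableEq W] {i j : B} {m : ℕ}
    (hm : (s i * s j) ^ m = 1) (t : W) :
    Even ((ris (alternatingWord i j (2 * m))).count t) := by
  -- the `k`-th inversion is `s j * (s i * s j) ^ k`, so the list has period `m`
  rw [← alternatingWord_two_mul_reverse, rightInvSeq_reverse, count_reverse]
  refine even_count_of_getElem_eq_getElem_add (by simp; ring) (fun k hk => ?_) t
  rw [getElem_leftInvSeq_alternatingWord _ _ _ _ _ (by omega),
    getElem_leftInvSeq_alternatingWord _ _ _ _ _ (by omega), prod_alternatingWord_eq_mul_pow,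
    prod_alternatingWord_eq_mul_pow]
  simp [Nat.mul_add_div, pow_add, hm]

section SignRepresentation

variable [DecidableEq W]

-- The action of `s i` in the sign representation (on reflections `t` this is Humphreys'
-- `(t, ε) ↦ (s t s, ε η(s, t))`); it is harmless to let `W` stand in for the set of reflections.
def signPermFun (i : B) (x : W × ℤˣ) : W × ℤˣ :=
  (s i * x.1 * s i, if x.1 = s i then -x.2 else x.2)

lemma signPermFun_involutive (i : B) : Function.Involutive (signPermFun cs i) := by
  rintro ⟨x, ε⟩
  have hx : s i * (s i * x * s i) * s i = x := by simp [mul_assoc]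
  have hfix : s i * x * s i = s i ↔ x = s i := by
    constructor
    · intro h; simpa [h] using hx.symm
    · rintro rfl; simp
  simp only [signPermFun, hx, hfix]
  split_ifs <;> simp

def signPerm (i : B) : Equiv.Perm (W × ℤˣ) := (signPermFun_involutive cs i).toPerm

lemma prod_map_signPerm_apply (ω : List B) (x : W × ℤˣ) :
    (ω.map (signPerm cs)).prod x = (π ω * x.1 * (π ω)⁻¹, x.2 * (-1) ^ (ris ω).count x.1) := by
  induction ω with
  | nil => simp
  | cons i ω ih =>
    have hfix : π ω * x.1 * (π ω)⁻¹ = s i ↔ (π ω)⁻¹ * s i * π ω = x.1 := by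
      constructor <;> intro h <;> rw [← h] <;> group
    rw [map_cons, prod_cons, Equiv.Perm.mul_apply, ih]
    simp only [signPerm, Function.Involutive.coe_toPerm, signPermFun, hfix, rightInvSeq,
      count_cons, wordProd_cons, mul_inv_rev, inv_simple, beq_iff_eq]
    refine Prod.ext (by simp only [mul_assoc]) ?_
    split_ifs <;> simp [pow_succ]

lemma isLiftable_signPerm : M.IsLiftable (signPerm cs) := by
  intro i j
  rw [← prod_map_alternatingWord_two_mul]
  ext1 x
  have hπ : π (alternatingWord i j (2 * M i j)) = 1 := by
    simp [prod_alternatingWord_eq_mul_pow]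
  rw [prod_map_signPerm_apply, hπ,
    (even_count_rightInvSeq_alternatingWord cs (cs.simple_mul_simple_pow i j) x.1).neg_one_pow]
  simp

def signRep : W →* Equiv.Perm (W × ℤˣ) := cs.lift ⟨signPerm cs, isLiftable_signPerm cs⟩

lemma signRep_wordProd_apply (ω : List B) (x : W × ℤˣ) :
    signRep cs (π ω) x = (π ω * x.1 * (π ω)⁻¹, x.2 * (-1) ^ (ris ω).count x.1) := by
  rw [← prod_map_signPerm_apply, wordProd, map_list_prod, map_map]
  congr 3
  exact funext (cs.lift_apply_simple (isLiftable_signPerm cs))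

lemma signRep_apply (w x : W) (ε : ℤˣ) :
    signRep cs w (x, ε) = (w * x * w⁻¹, ε * (signRep cs w (x, 1)).2) := by
  obtain ⟨ω, rfl⟩ := cs.wordProd_surjective w
  simp [signRep_wordProd_apply]

lemma signRep_self_of_isReflection {t : W} (ht : cs.IsReflection t) :
    signRep cs t (t, 1) = (t, -1) := by
  obtain ⟨y, i, rfl⟩ := ht
  obtain ⟨ε, hε⟩ : ∃ ε, signRep cs y⁻¹ (y * s i * y⁻¹, 1) = (s i, ε) :=
    ⟨_, by rw [signRep_apply, inv_inv]; congr 1; group⟩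
  have hback : signRep cs y (s i, ε) = (y * s i * y⁻¹, 1) := by
    rw [← hε, ← Equiv.Perm.mul_apply, ← map_mul, mul_inv_cancel, map_one, Equiv.Perm.one_apply]
  have hsimple : signRep cs (s i) (s i, ε) = (s i, -ε) := by
    simp [signRep, signPerm, signPermFun]
  rw [signRep_apply] at hback
  rw [map_mul, map_mul, Equiv.Perm.mul_apply, Equiv.Perm.mul_apply, hε, hsimple, signRep_apply]
  simpa using hback

end SignRepresentation

theorem mem_rightInvSeq_of_isRightInversion (ω : List B) {t : W}
    (ht : cs.IsRightInversion (π ω) t) : t ∈ ris ω := by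
  classical
  by_contra hnot
  obtain ⟨ψ, hψ, hψω⟩ := cs.exists_isReduced (π ω * t)
  have hω : π ω = π ψ * t := by rw [← hψω, mul_assoc, ht.1.mul_self, mul_one]
  -- The sign of `signRep (π ω) (t, 1)` is `1` when read along `ω`, and
  -- `-(-1) ^ count t (ris ψ)` when read along `ψ` followed by `t`.
  have hsign := congrArg Prod.snd (signRep_wordProd_apply cs ω (t, 1))
  rw [count_eq_zero_of_not_mem hnot, hω, map_mul, Equiv.Perm.mul_apply,
    signRep_self_of_isReflection cs ht.1, signRep_wordProd_apply] at hsign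
  have hψt : t ∈ ris ψ := by
    rw [← count_pos_iff, Nat.pos_iff_ne_zero]
    intro h0
    simp [h0] at hsign
  have := (cs.isRightInversion_of_mem_rightInvSeq hψ hψt).2
  rw [← hω, ← hψω] at this
  exact lt_asymm ht.2 (by simpa [mul_assoc, ht.1.mul_self] using this)

theorem exists_wordProd_eraseIdx_of_isRightInversion (ω : List B) {t : W}
    (ht : cs.IsRightInversion (π ω) t) : ∃ k < ω.length, π (ω.eraseIdx k) = π ω * t := by
  obtain ⟨k, hk, hkt⟩ := getElem_of_mem (cs.mem_rightInvSeq_of_isRightInversion ω ht)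
  refine ⟨k, by simpa using hk, ?_⟩
  rw [← cs.wordProd_mul_getD_rightInvSeq, getD_eq_getElem _ _ hk, hkt]

lemma isReduced_of_length_le {ω : List B} (h : ω.length ≤ ℓ (π ω)) : cs.IsReduced ω :=
  le_antisymm (cs.length_wordProd_le ω) h

lemma isReduced_cons {i : B} {ω : List B} (hω : cs.IsReduced ω)
    (h : ℓ (s i * π ω) = ℓ (π ω) + 1) : cs.IsReduced (i :: ω) :=
  cs.isReduced_of_length_le (by rw [wordProd_cons, h, hω.eq, length_cons])

theorem exists_isReduced_sublist (ω : List B) :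
    ∃ φ, φ <+ ω ∧ cs.IsReduced φ ∧ π φ = π ω := by
  induction ω using reverseRecOn with
  | nil => exact ⟨[], Sublist.refl _, cs.isReduced_of_length_le (by simp), rfl⟩
  | append_singleton α i ih =>
    obtain ⟨χ, hsub, hχ, hπ⟩ := ih
    rw [wordProd_append, wordProd_singleton, ← hπ]
    rcases cs.length_mul_simple (π χ) i with hup | hdown
    · refine ⟨χ ++ [i], hsub.append (Sublist.refl _), cs.isReduced_of_length_le ?_,
        by rw [wordProd_append, wordProd_singleton]⟩
      rw [wordProd_append, wordProd_singleton, hup, hχ.eq, length_append, length_singleton]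
    · obtain ⟨k, hk, he⟩ := cs.exists_wordProd_eraseIdx_of_isRightInversion χ
        ⟨cs.isReflection_simple i, by omega⟩
      refine ⟨χ.eraseIdx k, ((χ.eraseIdx_sublist k).trans hsub).trans (sublist_append_left _ _),
        cs.isReduced_of_length_le ?_, he⟩
      rw [he, length_eraseIdx_of_lt hk, ← hχ.eq]
      omega

end CoxeterSystem

namespace KMChev

open CoxeterSystem List

section BruhatLength

variable {B W : Type*} [Group W] {M : CoxeterMatrix B} {cs : CoxeterSystem M W}

theorem BruhatLE.length_le {v w : W} (h : BruhatLE cs v w) : cs.length v ≤ cs.length w := by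
  induction h with
  | refl => exact le_rfl
  | tail _ hc ih => have := hc.2; omega

theorem BruhatLT.length_lt {v w : W} (h : BruhatLT cs v w) : cs.length v < cs.length w := by
  rcases h.1.cases_tail with hwv | ⟨c, hvc, hcw⟩
  · exact absurd hwv.symm h.2
  · have := hcw.2; have := BruhatLE.length_le hvc; omega

end BruhatLength

section Bruhat

variable {B W : Type*} [Group W] {M : CoxeterMatrix B} (cs : CoxeterSystem M W)

local prefix:100 "s" => cs.simple
local prefix:100 "π" => cs.wordProd
local prefix:100 "ℓ" => cs.length

lemma bruhatCov_simple_mul {i : B} {w : W} (h : ℓ (s i * w) = ℓ w + 1) :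
    BruhatCov cs w (s i * w) :=
  ⟨⟨w⁻¹ * s i * w, by simpa using (cs.isReflection_simple i).conj w⁻¹, by group⟩, h⟩

lemma bruhatLT_simple_mul {i : B} {w : W} (h : ℓ (s i * w) = ℓ w + 1) :
    BruhatLT cs w (s i * w) :=
  ⟨.single (bruhatCov_simple_mul cs h), fun he => by rw [← he] at h; omega⟩

theorem exists_isReduced_sublist_of_bruhatLE {v w : W} (h : BruhatLE cs v w) {ω : List B}
    (hω : cs.IsReduced ω) (hπ : π ω = w) : ∃ φ, φ <+ ω ∧ cs.IsReduced φ ∧ π φ = v := by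
  induction h generalizing ω with
  | refl => exact ⟨ω, Sublist.refl ω, hω, hπ⟩
  | @tail b c _ hbc ih =>
    obtain ⟨⟨t, ht, hc⟩, hlen⟩ := hbc
    have hct : π ω * t = b := by rw [hπ, hc, mul_assoc, ht.mul_self, mul_one]
    obtain ⟨k, hk, he⟩ := cs.exists_wordProd_eraseIdx_of_isRightInversion ω
      ⟨ht, by rw [hct, hπ]; omega⟩
    rw [hct] at he
    have hred : cs.IsReduced (ω.eraseIdx k) := cs.isReduced_of_length_le (by
      rw [he, length_eraseIdx_of_lt hk, ← hω.eq, hπ]; omega)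
    obtain ⟨φ, hφ, hφred, hφv⟩ := ih hred he
    exact ⟨φ, hφ.trans (ω.eraseIdx_sublist k), hφred, hφv⟩

-- Indexed by `n` because the lifting properties for `w` of length `n + 1` only need it up to `n`.
def SubwordLE (n : ℕ) : Prop :=
  ∀ ω φ : List B, cs.IsReduced ω → ω.length ≤ n → φ <+ ω → BruhatLE cs (π φ) (π ω)

variable {cs} in
lemma SubwordLE.mono {m n : ℕ} (h : SubwordLE cs n) (hmn : m ≤ n) : SubwordLE cs m :=
  fun ω φ hω hlen hsub => h ω φ hω (hlen.trans hmn) hsub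

-- `v` is a subword of the reduced word `i :: ω` of `w`, which cannot use the leading `i`
-- because `s i * v > v`.
lemma exists_sublist_of_bruhatLE_of_isLeftDescent {i : B} {v w : W} (hw : ℓ (s i * w) < ℓ w)
    (hvw : BruhatLE cs v w) (hv : ℓ v < ℓ (s i * v)) :
    ∃ ω φ : List B, cs.IsReduced ω ∧ π ω = s i * w ∧ φ <+ ω ∧ π φ = v := by
  obtain ⟨ω, hω, hωw⟩ := cs.exists_isReduced (s i * w)
  have hiω : cs.IsReduced (i :: ω) := cs.isReduced_cons hω (by
    rw [← hωw, simple_mul_simple_cancel_left]; rcases cs.length_simple_mul w i with h | h <;> omega)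
  obtain ⟨φ, hφ, hφred, rfl⟩ := exists_isReduced_sublist_of_bruhatLE cs hvw hiω
    (by rw [wordProd_cons, ← hωw, simple_mul_simple_cancel_left])
  rcases sublist_cons_iff.mp hφ with hφ | ⟨φ₁, rfl, hφ₁⟩
  · exact ⟨ω, φ, hω, hωw.symm, hφ, rfl⟩
  · have := cs.length_wordProd_le φ₁
    rw [hφred.eq, wordProd_cons, simple_mul_simple_cancel_left, length_cons] at hv
    omega

lemma le_simple_mul_of_subwordLE {i : B} {v w : W} (hS : SubwordLE cs (ℓ (s i * w)))
    (hw : ℓ (s i * w) < ℓ w) (hvw : BruhatLE cs v w) (hv : ℓ v < ℓ (s i * v)) :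
    BruhatLE cs v (s i * w) := by
  obtain ⟨ω, φ, hω, hωw, hφ, rfl⟩ := exists_sublist_of_bruhatLE_of_isLeftDescent cs hw hvw hv
  rw [← hωw]
  exact hS ω φ hω (by rw [← hω.eq, hωw]) hφ

lemma simple_mul_le_of_subwordLE {i : B} {v w : W} (hS : SubwordLE cs (ℓ w))
    (hw : ℓ (s i * w) < ℓ w) (hvw : BruhatLE cs v w) (hv : ℓ v < ℓ (s i * v)) :
    BruhatLE cs (s i * v) w := by
  obtain ⟨ω, φ, hω, hωw, hφ, rfl⟩ := exists_sublist_of_bruhatLE_of_isLeftDescent cs hw hvw hv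
  have hw' : π (i :: ω) = w := by rw [wordProd_cons, hωw, simple_mul_simple_cancel_left]
  have hiω : cs.IsReduced (i :: ω) := cs.isReduced_cons hω (by
    rw [← wordProd_cons, hw', hωw]; rcases cs.length_simple_mul w i with h | h <;> omega)
  rw [← wordProd_cons, ← hw']
  exact hS _ _ hiω (by rw [← hiω.eq, hw']) (hφ.cons_cons i)

lemma simple_mul_le_simple_mul_of_subwordLE {n : ℕ} (hS : SubwordLE cs n) {i : B} {a b : W}
    (hab : BruhatLE cs a b) (hbn : ℓ b ≤ n + 1) (ha : ℓ a < ℓ (s i * a))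
    (hb : ℓ (s i * b) = ℓ b + 1) : BruhatLE cs (s i * a) (s i * b) := by
  induction hab with
  | refl => exact .refl
  | @tail c b hac hcb ih =>
    obtain ⟨⟨t, ht, rfl⟩, hlen⟩ := hcb
    rcases cs.length_simple_mul c i with hc | hc
    · rw [← mul_assoc] at hb ⊢
      exact (ih (by omega) hc).tail ⟨⟨t, ht, rfl⟩, by omega⟩
    · have hac' := simple_mul_le_of_subwordLE cs (hS.mono (by omega)) (by omega) hac ha
      exact (hac'.tail ⟨⟨t, ht, rfl⟩, hlen⟩).tail (bruhatCov_simple_mul cs hb)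

theorem subwordLE (n : ℕ) : SubwordLE cs n := by
  induction n with
  | zero =>
    rintro (_ | ⟨j, ω⟩) φ _ hlen hsub
    · rw [sublist_nil.mp hsub]; exact .refl
    · simp at hlen
  | succ n ih =>
    rintro (_ | ⟨j, ω⟩) φ hω hlen hsub
    · rw [sublist_nil.mp hsub]; exact .refl
    have hω₁ : cs.IsReduced ω := hω.drop 1
    have hj : ℓ (s j * π ω) = ℓ (π ω) + 1 := by
      rw [← wordProd_cons, hω.eq, hω₁.eq, length_cons]
    have hn : ω.length ≤ n := by simpa using hlen
    rw [wordProd_cons]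
    rcases sublist_cons_iff.mp hsub with hφ | ⟨φ₁, rfl, hφ₁⟩
    · exact (ih ω φ hω₁ hn hφ).tail (bruhatCov_simple_mul cs hj)
    rw [wordProd_cons]
    have hxy := ih ω φ₁ hω₁ hn hφ₁
    rcases cs.length_simple_mul (π φ₁) j with hx | hx
    · exact simple_mul_le_simple_mul_of_subwordLE cs ih hxy (by rw [hω₁.eq]; omega) (by omega) hj
    · have hcov := bruhatCov_simple_mul cs (i := j) (w := s j * π φ₁)
        (by rw [simple_mul_simple_cancel_left]; omega)
      rw [simple_mul_simple_cancel_left] at hcov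
      exact ((Relation.ReflTransGen.single hcov).trans hxy).tail (bruhatCov_simple_mul cs hj)

variable {cs} in
theorem BruhatLE.le_simple_mul {i : B} {v w : W} (hvw : BruhatLE cs v w)
    (hw : ℓ (s i * w) < ℓ w) (hv : ℓ v < ℓ (s i * v)) : BruhatLE cs v (s i * w) :=
  le_simple_mul_of_subwordLE cs (subwordLE cs _) hw hvw hv

end Bruhat

section Cosets

variable {B W : Type*} [Group W] {M : CoxeterMatrix B} (cs : CoxeterSystem M W) (J : Set B)

local prefix:100 "s" => cs.simple
local prefix:100 "π" => cs.wordProd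
local prefix:100 "ℓ" => cs.length

lemma wordProd_mem_WJ {κ : List B} (hκ : ∀ j ∈ κ, j ∈ J) : π κ ∈ WJ cs J := by
  induction κ with
  | nil => exact one_mem _
  | cons j κ ih =>
    rw [wordProd_cons]
    exact mul_mem (Subgroup.subset_closure ⟨j, hκ j mem_cons_self, rfl⟩)
      (ih fun x hx => hκ x (mem_cons_of_mem j hx))

lemma exists_word_of_mem_WJ {a : W} (ha : a ∈ WJ cs J) :
    ∃ κ : List B, (∀ j ∈ κ, j ∈ J) ∧ π κ = a := by
  induction ha using Subgroup.closure_induction with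
  | mem x hx =>
    obtain ⟨j, hj, rfl⟩ := hx
    exact ⟨[j], by simpa using hj, cs.wordProd_singleton j⟩
  | one => exact ⟨[], by simp, cs.wordProd_nil⟩
  | mul x y _ _ hx hy =>
    obtain ⟨κ₁, h₁, rfl⟩ := hx
    obtain ⟨κ₂, h₂, rfl⟩ := hy
    refine ⟨κ₁ ++ κ₂, fun j hj => ?_, cs.wordProd_append κ₁ κ₂⟩
    rcases mem_append.mp hj with h | h
    exacts [h₁ j h, h₂ j h]
  | inv x _ hx =>
    obtain ⟨κ, hκ, rfl⟩ := hx
    exact ⟨κ.reverse, fun j hj => hκ j (mem_reverse.mp hj), cs.wordProd_reverse κ⟩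

lemma exists_rightDescent_mem_of_mem_WJ {a : W} (ha : a ∈ WJ cs J) (h1 : a ≠ 1) :
    ∃ j ∈ J, ℓ (a * s j) < ℓ a := by
  obtain ⟨κ, hκJ, rfl⟩ := exists_word_of_mem_WJ cs J ha
  obtain ⟨φ, hφ, hφred, hπ⟩ := cs.exists_isReduced_sublist κ
  rcases eq_nil_or_concat φ with rfl | ⟨φ', j, rfl⟩
  · exact absurd (hπ.symm.trans cs.wordProd_nil) h1
  refine ⟨j, hκJ j (hφ.subset (by simp)), ?_⟩
  rw [← hπ, hφred.eq, wordProd_concat, simple_mul_simple_cancel_right]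
  have := cs.length_wordProd_le φ'
  simp only [concat_eq_append, length_append, length_singleton]
  omega

def IsMinLengthRep (u : W) (τ : W ⧸ WJ cs J) : Prop :=
  (u : W ⧸ WJ cs J) = τ ∧ ∀ x : W, (x : W ⧸ WJ cs J) = τ → ℓ u ≤ ℓ x

lemma exists_isMinLengthRep (τ : W ⧸ WJ cs J) : ∃ u, IsMinLengthRep cs J u τ := by
  obtain ⟨u, hu, hmin⟩ := (InvImage.wf cs.length wellFounded_lt).has_min
    {x : W | (x : W ⧸ WJ cs J) = τ} (QuotientGroup.mk_surjective τ)
  exact ⟨u, hu, fun x hx => not_lt.mp (hmin x hx)⟩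

variable {cs J}

lemma IsMinLengthRep.length_mul {u a : W} {τ : W ⧸ WJ cs J} (hu : IsMinLengthRep cs J u τ)
    (ha : a ∈ WJ cs J) : ℓ (u * a) = ℓ u + ℓ a := by
  obtain ⟨κ, hκJ, rfl⟩ := exists_word_of_mem_WJ cs J ha
  obtain ⟨ωu, hωu, rfl⟩ := cs.exists_isReduced u
  obtain ⟨ζ, hζ, hζred, hζπ⟩ := cs.exists_isReduced_sublist (ωu ++ κ)
  obtain ⟨ζ₁, ζ₂, rfl, h₁, h₂⟩ := sublist_append_iff.mp hζ
  rw [wordProd_append, wordProd_append] at hζπ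
  -- the part of `ζ` inside `ωu` still represents `τ`, so by minimality it is all of `ωu`
  have hcoset : (π ζ₁ : W ⧸ WJ cs J) = τ := by
    rw [← hu.1, QuotientGroup.eq, show (π ζ₁)⁻¹ * π ωu = π ζ₂ * (π κ)⁻¹ by
      rw [eq_mul_inv_iff_mul_eq, mul_assoc, ← hζπ]; group]
    exact mul_mem (wordProd_mem_WJ cs J fun j hj => hκJ j (h₂.subset hj))
      (inv_mem (wordProd_mem_WJ cs J hκJ))
  have hζ₁ : ζ₁ = ωu := by
    refine h₁.eq_of_length (le_antisymm h₁.length_le ?_)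
    have := hu.2 _ hcoset
    have := cs.length_wordProd_le ζ₁
    rw [hωu.eq] at *
    omega
  subst hζ₁
  have hζ₂ : π ζ₂ = π κ := mul_left_cancel hζπ
  refine le_antisymm (cs.length_mul_le _ _) ?_
  rw [← hζπ, ← wordProd_append, hζred.eq, length_append, hωu.eq, ← hζ₂]
  exact Nat.add_le_add_left (cs.length_wordProd_le ζ₂) _

lemma isMinLengthRep_of_mem_minRep {u : W} (hu : u ∈ MinRep cs J) :
    IsMinLengthRep cs J u u := by
  obtain ⟨u₀, hu₀⟩ := exists_isMinLengthRep cs J (u : W ⧸ WJ cs J)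
  have ha : u₀⁻¹ * u ∈ WJ cs J := QuotientGroup.eq.mp hu₀.1
  by_cases h1 : u₀⁻¹ * u = 1
  · obtain rfl := inv_mul_eq_one.mp h1
    exact hu₀
  obtain ⟨j, hj, hdesc⟩ := exists_rightDescent_mem_of_mem_WJ cs J ha h1
  have h₁ := hu₀.length_mul ha
  have h₂ := hu₀.length_mul (mul_mem ha (Subgroup.subset_closure ⟨j, hj, rfl⟩))
  rw [mul_inv_cancel_left] at h₁
  rw [← mul_assoc, mul_inv_cancel_left] at h₂
  have := hu j hj
  omega

lemma IsMinLengthRep.simple_mul {u u' : W} {τ : W ⧸ WJ cs J} {i : B}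
    (hu : IsMinLengthRep cs J u τ) (hu' : IsMinLengthRep cs J u' (s i • τ))
    (hlt : ℓ u < ℓ u') : IsMinLengthRep cs J (s i * u) (s i • τ) ∧ ℓ (s i * u) = ℓ u + 1 := by
  have hsu : ((s i * u : W) : W ⧸ WJ cs J) = s i • τ := by rw [← hu.1]; rfl
  have hlen : ℓ (s i * u) = ℓ u + 1 := by
    have := hu'.2 _ hsu
    rcases cs.length_simple_mul u i with h | h <;> omega
  exact ⟨⟨hsu, fun x hx => by have := hu'.2 x hx; omega⟩, hlen⟩

lemma CosetLT.length_simple_mul {τ : W ⧸ WJ cs J} {i : B} (h : CosetLT cs J τ (s i • τ))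
    {w : W} (hw : (w : W ⧸ WJ cs J) = τ) : ℓ (s i * w) = ℓ w + 1 := by
  obtain ⟨⟨u, u', hu, hu', rfl, hu'τ, huu'⟩, hne⟩ := h
  have hlt : ℓ u < ℓ u' := BruhatLT.length_lt ⟨huu', by rintro rfl; exact hne hu'τ⟩
  obtain ⟨hsu, hlen⟩ := (isMinLengthRep_of_mem_minRep hu).simple_mul
    (hu'τ ▸ isMinLengthRep_of_mem_minRep hu') hlt
  have ha : u⁻¹ * w ∈ WJ cs J := QuotientGroup.eq.mp hw.symm
  have h₁ := (isMinLengthRep_of_mem_minRep hu).length_mul ha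
  have h₂ := hsu.length_mul ha
  rw [mul_inv_cancel_left] at h₁
  rw [mul_assoc, mul_inv_cancel_left] at h₂
  omega

end Cosets

theorem lift_lowlift_general {B W : Type*} [Group W] {M : CoxeterMatrix B}
    (cs : CoxeterSystem M W) (J : Set B) (i : B) (v w : W) (τ : W ⧸ WJ cs J)
    (hw : (BruhatLE cs v w ∧ (QuotientGroup.mk w : W ⧸ WJ cs J) = τ) ∧
      ∀ x : W, BruhatLE cs v x → (QuotientGroup.mk x : W ⧸ WJ cs J) = τ →
        BruhatLE cs w x) :
    (CosetLT cs J τ (cs.simple i • τ) → BruhatLT cs w (cs.simple i * w)) ∧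
    (CosetLT cs J (cs.simple i • τ) τ → BruhatLT cs (cs.simple i * w) w) ∧
    (cs.simple i • τ = τ → BruhatLT cs v (cs.simple i * v) →
      BruhatLT cs w (cs.simple i * w)) := by
  obtain ⟨⟨hvw, hwτ⟩, hmin⟩ := hw
  have hsw : ((cs.simple i * w : W) : W ⧸ WJ cs J) = cs.simple i • τ := by rw [← hwτ]; rfl
  refine ⟨fun h => bruhatLT_simple_mul cs (h.length_simple_mul hwτ), fun h => ?_, fun hfix hv => ?_⟩
  · have h' : CosetLT cs J (cs.simple i • τ) (cs.simple i • cs.simple i • τ) := by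
      rwa [smul_smul, cs.simple_mul_simple_self, one_smul]
    simpa only [cs.simple_mul_simple_cancel_left] using
      bruhatLT_simple_mul cs (h'.length_simple_mul hsw)
  · rcases cs.length_simple_mul w i with hup | hdown
    · exact bruhatLT_simple_mul cs hup
    · have hle := hmin _ (hvw.le_simple_mul (by omega) hv.length_lt) (hsw.trans hfix)
      have := hle.length_le
      omega

/-- let `vW_J ≤ τ` and let `w = up(v,τ)` be the Bruhat-minimum of
`{x : v ≤ x, xW_J = τ}`. For a simple reflection `s`:
if `sτ > τ` then `sw > w`; if `sτ < τ` then `sw < w`; and if `sτ = τ` and `sv > v`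
then `sw > w`. -/
theorem lift_lowlift {B W : Type*} [Group W] {M : CoxeterMatrix B}
    (cs : CoxeterSystem M W) (J : Set B) (i : B) (v w : W) (τ : W ⧸ WJ cs J)
    (hvτ : CosetLE cs J (QuotientGroup.mk v) τ)
    (hw : (BruhatLE cs v w ∧ (QuotientGroup.mk w : W ⧸ WJ cs J) = τ) ∧
      ∀ x : W, BruhatLE cs v x → (QuotientGroup.mk x : W ⧸ WJ cs J) = τ →
        BruhatLE cs w x) :
    (CosetLT cs J τ (cs.simple i • τ) → BruhatLT cs w (cs.simple i * w)) ∧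
    (CosetLT cs J (cs.simple i • τ) τ → BruhatLT cs (cs.simple i * w) w) ∧
    (cs.simple i • τ = τ → BruhatLT cs v (cs.simple i * v) →
      BruhatLT cs w (cs.simple i * w)) :=
  lift_lowlift_general cs J i v w τ hw

end KMChev
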